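/- In Ruleset C of Quantum Nim (where a single classical move is legal only if it is legal in every realisation; superposed moves of at least two classical moves are legal as usual), a superposition of ℓ single Nim heaps with maximum heap size k has Grundy value k if ℓ = 1, and k−1 if ℓ ≥ 2. -/

import Mathlib

namespace QGame

variable {Pos Move : Type} [DecidableEq Pos]

/-- Result of applying the superposed move `M` (a finite set of classical move
labels) to the superposition `S` of classical positions: the set of all results
of a classical move of `M` applied to a realisation where it is legal. -/
def qApply (Γ : Pos → Move → Option Pos) (S : Finset Pos) (M : Finset Move) :
    Finset Pos :=
  S.biUnion fun G => M.biUnion fun m => (Γ G m).toFinset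

/-- The classical move `m` is legal in at least one realisation of `S`. -/
def MoveLegal (Γ : Pos → Move → Option Pos) (S : Finset Pos) (m : Move) : Prop :=
  ∃ G ∈ S, (Γ G m).isSome

/-- Basic legality of a Q-move: nonempty, and each classical move is legal
in at least one realisation. -/
def QBase (Γ : Pos → Move → Option Pos) (S : Finset Pos) (M : Finset Move) : Prop :=
  M.Nonempty ∧ ∀ m ∈ M, MoveLegal Γ S m

/-- Ruleset A : superpositions of at least two distinct classical moves. -/
def QLegalA (Γ : Pos → Move → Option Pos) (S : Finset Pos) (M : Finset Move) : Prop :=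
  QBase Γ S M ∧ 2 ≤ M.card

/-- Ruleset B : as A, except a lone classical move may be played when it is the
only legal classical move over all realisations. -/
def QLegalB (Γ : Pos → Move → Option Pos) (S : Finset Pos) (M : Finset Move) : Prop :=
  QBase Γ S M ∧ (2 ≤ M.card ∨ ∀ m, MoveLegal Γ S m → m ∈ M)

/-- Ruleset C : a lone classical move must be legal in every realisation. -/
def QLegalC (Γ : Pos → Move → Option Pos) (S : Finset Pos) (M : Finset Move) : Prop :=
  QBase Γ S M ∧ (2 ≤ M.card ∨ ∀ G ∈ S, ∀ m ∈ M, (Γ G m).isSome)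

/-- A single classical move is C'-allowed: legal in every realisation where the
mover still has at least one classical move. -/
def SingleLegalC' (Γ : Pos → Move → Option Pos) (S : Finset Pos) (m : Move) : Prop :=
  ∀ G ∈ S, (∃ m', (Γ G m').isSome) → (Γ G m).isSome

/-- Ruleset C'. -/
def QLegalC' (Γ : Pos → Move → Option Pos) (S : Finset Pos) (M : Finset Move) : Prop :=
  QBase Γ S M ∧ (2 ≤ M.card ∨ ∀ m ∈ M, SingleLegalC' Γ S m)

/-- Ruleset D : any nonempty superposition of legal classical moves. -/
def QLegalD (Γ : Pos → Move → Option Pos) (S : Finset Pos) (M : Finset Move) : Prop :=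
  QBase Γ S M

def optA (Γ : Pos → Move → Option Pos) (S : Finset Pos) : Set (Finset Pos) :=
  {T | ∃ M, QLegalA Γ S M ∧ T = qApply Γ S M}
def optB (Γ : Pos → Move → Option Pos) (S : Finset Pos) : Set (Finset Pos) :=
  {T | ∃ M, QLegalB Γ S M ∧ T = qApply Γ S M}
def optC (Γ : Pos → Move → Option Pos) (S : Finset Pos) : Set (Finset Pos) :=
  {T | ∃ M, QLegalC Γ S M ∧ T = qApply Γ S M}
def optC' (Γ : Pos → Move → Option Pos) (S : Finset Pos) : Set (Finset Pos) :=
  {T | ∃ M, QLegalC' Γ S M ∧ T = qApply Γ S M}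
def optD (Γ : Pos → Move → Option Pos) (S : Finset Pos) : Set (Finset Pos) :=
  {T | ∃ M, QLegalD Γ S M ∧ T = qApply Γ S M}

/-- `NPos opt p` : under normal play, the player to move from `p` wins,
i.e. there is a move to a position all of whose options are again `NPos`
(that is, to a previous-player-win position). -/
inductive NPos {α : Type*} (opt : α → Set α) : α → Prop where
  | mk (p q : α) (hq : q ∈ opt p) (h : ∀ r, r ∈ opt q → NPos opt r) :
      NPos opt p

/-- `PPos opt p` : `p` is a previous-player win (the second player wins)
under normal play: every option is a next-player win. -/
def PPos {α : Type*} (opt : α → Set α) (p : α) : Prop :=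
  ∀ q ∈ opt p, NPos opt q

/-- Options of the sum of a game with a classical Nim heap: move in the game
component, or decrease the heap component. -/
def sumNimOpt {α : Type*} (opt : α → Set α) : α × ℕ → Set (α × ℕ) :=
  fun x => {y | (y.1 ∈ opt x.1 ∧ y.2 = x.2) ∨ (y.1 = x.1 ∧ y.2 < x.2)}

/-- `HasGrundy opt p n` : position `p` has Sprague–Grundy value `n` (the value
obtained by the mex rule). By the Sprague–Grundy theorem this holds iff the sum
of `p` with a Nim heap of `n` tokens is a previous-player win. -/
def HasGrundy {α : Type*} (opt : α → Set α) (p : α) (n : ℕ) : Prop :=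
  PPos (sumNimOpt opt) (p, n)

/-- Classical single-heap Nim: from a heap of `n` tokens, the move labelled `x`
removes `x` tokens, legal when `1 ≤ x ≤ n`. -/
def nimΓ : ℕ → ℕ → Option ℕ := fun n x =>
  if 1 ≤ x ∧ x ≤ n then some (n - x) else none

end QGame

/-!
Every Q-move lowers the largest heap, and from two or more heaps (or with two or more classical
moves) it leaves at least two heaps; hence the candidate value `rulesetCValue` strictly decreases
along moves. Conversely, a lone heap `g` reaches the lone heap `n < g` classically, and from the
largest heap `k` among several, the superposed move `{k - n - 1, k - n}` yields heaps `n` and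
`n + 1` on top, i.e. value `n`. The mex characterization of Grundy values then applies.
-/

namespace QGame

section Grundy

variable {α : Type*} {opt : α → Set α}

theorem wellFounded_sumNimOpt (hwf : WellFounded fun q p => q ∈ opt p) :
    WellFounded fun y x => y ∈ sumNimOpt opt x :=
  (hwf.prod_gameAdd wellFounded_lt).mono fun y x h => by
    rcases h with ⟨hq, hn⟩ | ⟨hp, hn⟩
    · exact Prod.gameAdd_iff.mpr (Or.inl ⟨hq, hn⟩)
    · exact Prod.gameAdd_iff.mpr (Or.inr ⟨hn, hp⟩)

theorem hasGrundy_of_mex (hwf : WellFounded fun q p => q ∈ opt p) (v : α → ℕ)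
    (hne : ∀ p, ∀ q ∈ opt p, v q ≠ v p) (hex : ∀ p, ∀ n < v p, ∃ q ∈ opt p, v q = n)
    (p : α) : HasGrundy opt p (v p) := by
  suffices ∀ x : α × ℕ, (v x.1 = x.2 → PPos (sumNimOpt opt) x) ∧
      (v x.1 ≠ x.2 → NPos (sumNimOpt opt) x) from (this (p, v p)).1 rfl
  intro x
  induction x using (wellFounded_sumNimOpt hwf).induction with
  | _ x ih =>
  obtain ⟨p, n⟩ := x
  dsimp only
  refine ⟨?_, fun hn => ?_⟩
  · rintro rfl y hy
    refine (ih y hy).2 ?_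
    rcases hy with ⟨hq, hm⟩ | ⟨hp, hm⟩
    · rw [hm]; exact hne p y.1 hq
    · rw [hp]; exact hm.ne'
  · rcases hn.lt_or_gt with hlt | hgt
    · have hmove : (p, v p) ∈ sumNimOpt opt (p, n) := Or.inr ⟨rfl, hlt⟩
      exact NPos.mk _ _ hmove ((ih _ hmove).1 rfl)
    · obtain ⟨q, hq, rfl⟩ := hex p n hgt
      have hmove : (q, v q) ∈ sumNimOpt opt (p, v q) := Or.inl ⟨hq, rfl⟩
      exact NPos.mk _ _ hmove ((ih _ hmove).1 rfl)

end Grundy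

section RulesetC

variable {S M : Finset ℕ}

theorem nimΓ_isSome_iff {G m : ℕ} : (nimΓ G m).isSome ↔ 1 ≤ m ∧ m ≤ G := by
  unfold nimΓ; split_ifs with h <;> simp [h]

theorem mem_qApply_nimΓ {t : ℕ} :
    t ∈ qApply nimΓ S M ↔ ∃ G ∈ S, ∃ m ∈ M, 1 ≤ m ∧ m ≤ G ∧ G - m = t := by
  simp [qApply, nimΓ, and_assoc]

theorem sup_qApply_nimΓ_le {a : ℕ} (ha : ∀ m ∈ M, a ≤ m) :
    (qApply nimΓ S M).sup id ≤ S.sup id - a := by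
  refine Finset.sup_le fun t ht => ?_
  obtain ⟨G, hG, m, hm, -, hmG, rfl⟩ := mem_qApply_nimΓ.mp ht
  have := Finset.le_sup (f := id) hG
  have := ha m hm
  simp only [id] at *
  omega

theorem le_sup_of_moveLegal_nimΓ {m : ℕ} (h : MoveLegal nimΓ S m) :
    1 ≤ m ∧ m ≤ S.sup id := by
  obtain ⟨G, hG, hGm⟩ := h
  have := Finset.le_sup (f := id) hG
  rw [nimΓ_isSome_iff] at hGm
  exact ⟨hGm.1, hGm.2.trans this⟩

theorem two_le_card_of_mem_optC {T : Finset ℕ} (hT : T ∈ optC nimΓ S) (hS : 2 ≤ S.card) :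
    2 ≤ T.card := by
  obtain ⟨M, ⟨⟨⟨m₀, hm₀⟩, hlegal⟩, hC⟩, rfl⟩ := hT
  rcases hC with hM | hall
  · -- both classical moves are legal from the largest heap, with different results
    obtain ⟨k, hk, hsup⟩ := S.exists_mem_eq_sup (Finset.card_pos.mp (by omega)) id
    have hlegal_k : ∀ m ∈ M, 1 ≤ m ∧ m ≤ k := fun m hm => by
      simpa [hsup] using le_sup_of_moveLegal_nimΓ (hlegal m hm)
    obtain ⟨x, hx, y, hy, hxy⟩ := Finset.one_lt_card.mp hM
    refine Finset.one_lt_card.mpr ⟨k - x, ?_, k - y, ?_, ?_⟩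
    · exact mem_qApply_nimΓ.mpr ⟨k, hk, x, hx, (hlegal_k x hx).1, (hlegal_k x hx).2, rfl⟩
    · exact mem_qApply_nimΓ.mpr ⟨k, hk, y, hy, (hlegal_k y hy).1, (hlegal_k y hy).2, rfl⟩
    · have := hlegal_k x hx; have := hlegal_k y hy; omega
  · -- the lone classical move is legal on two different heaps, with different results
    obtain ⟨G₁, hG₁, G₂, hG₂, hG⟩ := Finset.one_lt_card.mp hS
    have h₁ := nimΓ_isSome_iff.mp (hall G₁ hG₁ m₀ hm₀)
    have h₂ := nimΓ_isSome_iff.mp (hall G₂ hG₂ m₀ hm₀)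
    refine Finset.one_lt_card.mpr ⟨G₁ - m₀, ?_, G₂ - m₀, ?_, by omega⟩
    · exact mem_qApply_nimΓ.mpr ⟨G₁, hG₁, m₀, hm₀, h₁.1, h₁.2, rfl⟩
    · exact mem_qApply_nimΓ.mpr ⟨G₂, hG₂, m₀, hm₀, h₂.1, h₂.2, rfl⟩

theorem card_le_sup_id_add_one (T : Finset ℕ) : T.card ≤ T.sup id + 1 := by
  simpa using Finset.card_le_card fun x hx =>
    Finset.mem_range.mpr (Nat.lt_succ_of_le (Finset.le_sup (f := id) hx))

def rulesetCValue (S : Finset ℕ) : ℕ :=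
  if 2 ≤ S.card then S.sup id - 1 else S.sup id

@[simp]
theorem rulesetCValue_singleton (g : ℕ) : rulesetCValue {g} = g := by
  simp [rulesetCValue]

theorem rulesetCValue_lt_of_mem_optC {T : Finset ℕ} (hT : T ∈ optC nimΓ S) :
    rulesetCValue T < rulesetCValue S := by
  have hcard := two_le_card_of_mem_optC hT
  have hT_card := card_le_sup_id_add_one T
  obtain ⟨M, ⟨⟨⟨m₀, hm₀⟩, hlegal⟩, -⟩, rfl⟩ := hT
  have hm₀_le := le_sup_of_moveLegal_nimΓ (hlegal m₀ hm₀)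
  have hsup : (qApply nimΓ S M).sup id ≤ S.sup id - 1 :=
    sup_qApply_nimΓ_le fun m hm => (le_sup_of_moveLegal_nimΓ (hlegal m hm)).1
  unfold rulesetCValue
  split_ifs <;> omega

theorem singleton_mem_optC_singleton {g n : ℕ} (hn : n < g) :
    ({n} : Finset ℕ) ∈ optC nimΓ {g} := by
  have hmove : 1 ≤ g - n ∧ g - n ≤ g := by omega
  have hresult : qApply nimΓ {g} {g - n} = {n} := by
    ext t
    simp only [mem_qApply_nimΓ, Finset.mem_singleton, exists_eq_left]
    omega
  refine ⟨{g - n}, ⟨⟨Finset.singleton_nonempty _, ?_⟩, Or.inr ?_⟩, hresult.symm⟩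
  · simpa [MoveLegal, nimΓ_isSome_iff] using hmove
  · simpa [nimΓ_isSome_iff] using hmove

theorem exists_mem_optC_rulesetCValue_eq_of_two_le_card (hS : 2 ≤ S.card) {n : ℕ}
    (hn : n < rulesetCValue S) : ∃ T ∈ optC nimΓ S, rulesetCValue T = n := by
  obtain ⟨k, hk, hsup⟩ := S.exists_mem_eq_sup (Finset.card_pos.mp (by omega)) id
  simp only [rulesetCValue, hS, if_true, hsup, id] at hn
  set M : Finset ℕ := {k - n - 1, k - n}
  have hM_card : M.card = 2 := Finset.card_pair (by omega)
  have hM_mem : ∀ m ∈ M, k - n - 1 ≤ m ∧ m ≤ k - n := by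
    intro m hm
    simp only [M, Finset.mem_insert, Finset.mem_singleton] at hm
    omega
  have hn_mem : n ∈ qApply nimΓ S M :=
    mem_qApply_nimΓ.mpr ⟨k, hk, k - n, by simp [M], by omega, by omega, by omega⟩
  have hn_succ_mem : n + 1 ∈ qApply nimΓ S M :=
    mem_qApply_nimΓ.mpr ⟨k, hk, k - n - 1, by simp [M], by omega, by omega, by omega⟩
  have hT_sup : (qApply nimΓ S M).sup id = n + 1 := by
    have := sup_qApply_nimΓ_le (S := S) fun m hm => (hM_mem m hm).1
    have := Finset.le_sup (f := id) hn_succ_mem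
    simp only [hsup, id] at *
    omega
  have hT_card : 2 ≤ (qApply nimΓ S M).card :=
    Finset.one_lt_card.mpr ⟨n, hn_mem, n + 1, hn_succ_mem, by omega⟩
  refine ⟨_, ⟨M, ⟨⟨⟨k - n, by simp [M]⟩, fun m hm => ⟨k, hk, ?_⟩⟩, Or.inl hM_card.ge⟩, rfl⟩,
    ?_⟩
  · have := hM_mem m hm
    rw [nimΓ_isSome_iff]
    omega
  · simp only [rulesetCValue, hT_card, if_true, hT_sup]
    omega

theorem exists_mem_optC_rulesetCValue_eq {n : ℕ} (hn : n < rulesetCValue S) :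
    ∃ T ∈ optC nimΓ S, rulesetCValue T = n := by
  rcases lt_or_ge S.card 2 with hS₁ | hS₂
  · obtain hS₀ | hS₁ : S.card = 0 ∨ S.card = 1 := by omega
    · simp [Finset.card_eq_zero.mp hS₀, rulesetCValue] at hn
    · obtain ⟨g, rfl⟩ := Finset.card_eq_one.mp hS₁
      rw [rulesetCValue_singleton] at hn
      exact ⟨{n}, singleton_mem_optC_singleton hn, rulesetCValue_singleton n⟩
  · exact exists_mem_optC_rulesetCValue_eq_of_two_le_card hS₂ hn

end RulesetC

/-- In Ruleset C of Quantum Nim, a superposition of `ℓ` single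
Nim heaps with maximum heap size `k` has Grundy value `k` if `ℓ = 1` and
`k - 1` if `ℓ ≥ 2`. -/
theorem rulesetC_single_heap_value (S : Finset ℕ) (hS : S.Nonempty) (k : ℕ)
    (hmax : S.max' hS = k) :
    (S.card = 1 → HasGrundy (optC nimΓ) S k) ∧
    (2 ≤ S.card → HasGrundy (optC nimΓ) S (k - 1)) := by
  have hsup : S.sup id = k := by rw [← hmax, Finset.max'_eq_sup', Finset.sup'_eq_sup]
  have hwf : WellFounded fun T S => T ∈ optC nimΓ S :=
    (measure rulesetCValue).wf.mono fun _ _ => rulesetCValue_lt_of_mem_optC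
  have hGrundy := hasGrundy_of_mex hwf rulesetCValue
    (fun _ _ hT => (rulesetCValue_lt_of_mem_optC hT).ne)
    (fun _ _ hn => exists_mem_optC_rulesetCValue_eq hn) S
  refine ⟨fun hS₁ => ?_, fun hS₂ => ?_⟩
  · simpa [rulesetCValue, hS₁, hsup] using hGrundy
  · simpa [rulesetCValue, hS₂, hsup] using hGrundy

end QGame
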